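/- Let F⁻, F⁺, n̂ ∈ ℝⁿ with n̂ a unit vector, n̂ · F⁻ > 0 and n̂ · F⁺ > 0, and let w₁, …, w_{n−1} be an orthonormal basis of the orthogonal complement of n̂. Let A be the matrix with rows F⁺, w₁, …, w_{n−1} and B the matrix with rows F⁻, w₁, …, w_{n−1}. Let S = I + ((F⁺−F⁻) n̂ᵀ)/(n̂ · F⁻). Then A⁻¹ B = (S⁻¹)ᵀ. -/

import Mathlib

/-!
Row by row, `S` sends `F⁻` to `F⁺` and fixes each `wᵢ ⟂ n̂`, so `A = B Sᵀ`. The rows of `B` are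
independent, since the `wᵢ` are orthonormal and `F⁻` has a nonzero component along `n̂`; hence
`A⁻¹ B = (Sᵀ)⁻¹ B⁻¹ B = (S⁻¹)ᵀ`.
-/

open Matrix

section

variable {ι m R : Type*} [Fintype m] [CommRing R]

theorem linearIndependent_of_dotProduct_eq_ite [Fintype ι] [DecidableEq ι] {w : ι → m → R}
    (horth : ∀ i j, w i ⬝ᵥ w j = if i = j then 1 else 0) : LinearIndependent R w := by
  refine Fintype.linearIndependent_iff.2 fun g hg j => ?_
  simpa [sum_dotProduct, smul_dotProduct, horth] using congrArg (· ⬝ᵥ w j) hg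

theorem notMem_span_range_of_dotProduct [Fintype ι] {w : ι → m → R} {x v : m → R}
    (hperp : ∀ i, w i ⬝ᵥ v = 0) (hx : x ⬝ᵥ v ≠ 0) : x ∉ Submodule.span R (Set.range w) := by
  intro hmem
  obtain ⟨c, rfl⟩ := (Submodule.mem_span_range_iff_exists_fun R).1 hmem
  simp [sum_dotProduct, smul_dotProduct, hperp] at hx

theorem of_mul_transpose (r : ι → m → R) (S : Matrix m m R) :
    Matrix.of r * Sᵀ = Matrix.of fun i => S *ᵥ r i := by
  ext i j
  simp [mul_apply, mulVec, dotProduct, mul_comm]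

theorem mulVec_one_add_smul_vecMulVec [DecidableEq m] (c : R) (u v x : m → R) :
    (1 + c • vecMulVec u v) *ᵥ x = x + (c * (v ⬝ᵥ x)) • u := by
  simp [add_mulVec, vecMulVec_mulVec, smul_mulVec, mul_smul]

theorem isUnit_of_vecCons_of_dotProduct {n : ℕ} {K : Type*} [Field K] {x v : Fin (n + 1) → K}
    {w : Fin n → Fin (n + 1) → K}
    (horth : ∀ i j, w i ⬝ᵥ w j = if i = j then 1 else 0) (hperp : ∀ i, w i ⬝ᵥ v = 0)
    (hx : x ⬝ᵥ v ≠ 0) : IsUnit (Matrix.of (vecCons x w)) :=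
  linearIndependent_rows_iff_isUnit.1 <| linearIndependent_finCons.2
    ⟨linearIndependent_of_dotProduct_eq_ite horth, notMem_span_range_of_dotProduct hperp hx⟩

end

theorem jump_matrix_eq_inv_transpose_saltation_general {n : ℕ}
    (Fm Fp nhat : Fin (n + 1) → ℝ) (w : Fin n → Fin (n + 1) → ℝ)
    (hm : nhat ⬝ᵥ Fm > 0)
    (horth : ∀ i j, w i ⬝ᵥ w j = if i = j then 1 else 0)
    (hperp : ∀ i, w i ⬝ᵥ nhat = 0)
    (A B S : Matrix (Fin (n + 1)) (Fin (n + 1)) ℝ)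
    (hA : A = Matrix.of (Matrix.vecCons Fp w))
    (hB : B = Matrix.of (Matrix.vecCons Fm w))
    (hS : S = 1 + (nhat ⬝ᵥ Fm)⁻¹ • vecMulVec (Fp - Fm) nhat) :
    A⁻¹ * B = (S⁻¹)ᵀ := by
  have hA_eq : A = B * Sᵀ := by
    rw [hA, hB, hS, of_mul_transpose]
    congr 1
    ext i : 1
    cases i using Fin.cases with
    | zero => simp [mulVec_one_add_smul_vecMulVec, hm.ne']
    | succ i => simp [mulVec_one_add_smul_vecMulVec, dotProduct_comm nhat, hperp]
  have hB_unit : IsUnit B.det := by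
    rw [← isUnit_iff_isUnit_det, hB]
    exact isUnit_of_vecCons_of_dotProduct horth hperp (dotProduct_comm Fm nhat ▸ hm.ne')
  rw [hA_eq, Matrix.mul_inv_rev, mul_assoc, nonsing_inv_mul B hB_unit, mul_one,
    transpose_nonsing_inv]

/-- The iPRC jump matrix `M = A⁻¹ B` equals the inverse transpose of the saltation
matrix `S = I + ((F⁺−F⁻) n̂ᵀ)/(n̂ ⬝ F⁻)`. -/
theorem jump_matrix_eq_inv_transpose_saltation {n : ℕ}
    (Fm Fp nhat : Fin (n + 1) → ℝ) (w : Fin n → Fin (n + 1) → ℝ)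
    (hunit : nhat ⬝ᵥ nhat = 1)
    (hm : nhat ⬝ᵥ Fm > 0) (hp : nhat ⬝ᵥ Fp > 0)
    (horth : ∀ i j, w i ⬝ᵥ w j = if i = j then 1 else 0)
    (hperp : ∀ i, w i ⬝ᵥ nhat = 0)
    (A B S : Matrix (Fin (n + 1)) (Fin (n + 1)) ℝ)
    (hA : A = Matrix.of (Matrix.vecCons Fp w))
    (hB : B = Matrix.of (Matrix.vecCons Fm w))
    (hS : S = 1 + (nhat ⬝ᵥ Fm)⁻¹ • vecMulVec (Fp - Fm) nhat) :
    A⁻¹ * B = (S⁻¹)ᵀ :=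
  jump_matrix_eq_inv_transpose_saltation_general Fm Fp nhat w hm horth hperp A B S hA hB hS
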